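/- arXiv:2411.15794 — 6 statements merged into one kernel-verified Lean document; each statement's English description precedes it below -/
import Mathlib

section
/- Let Γ be a finite connected simple graph on n vertices in which every vertex has a twin, and let r be the number of equivalence classes of the twin relation. Then b(Γ) = dim(Γ) = adim(Γ) = n − r. -/
open SimpleGraph

variable {V : Type*}

/-- Two distinct vertices are twins if they have the same neighbours except possibly each other. -/
def Twins (G : SimpleGraph V) (v w : V) : Prop :=
  v ≠ w ∧ G.neighborSet v \ {w} = G.neighborSet w \ {v}

/-- `W` is a resolving set for `G` (w.r.t. graph distance). -/
def Resolves (G : SimpleGraph V) (W : Set V) : Prop :=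
  ∀ x y : V, (∀ u ∈ W, G.dist x u = G.dist y u) → x = y

/-- `S` is an adjacency resolving set: resolving w.r.t. the distance truncated at 2. -/
def AdjResolves (G : SimpleGraph V) (S : Set V) : Prop :=
  ∀ x y : V, (∀ u ∈ S, min (G.dist x u) 2 = min (G.dist y u) 2) → x = y

/-- Metric dimension: minimum size of a resolving set. -/
noncomputable def metricDim (G : SimpleGraph V) : ℕ :=
  sInf {k | ∃ W : Set V, W.ncard = k ∧ Resolves G W}

/-- Adjacency dimension: minimum size of an adjacency resolving set. -/
noncomputable def adjDim (G : SimpleGraph V) : ℕ :=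
  sInf {k | ∃ S : Set V, S.ncard = k ∧ AdjResolves G S}

/-- `B` is a base: any automorphism fixing `B` pointwise is the identity. -/
def IsBase (G : SimpleGraph V) (B : Set V) : Prop :=
  ∀ φ : G ≃g G, (∀ v ∈ B, φ v = v) → ∀ v : V, φ v = v

/-- Base size: minimum size of a base. -/
noncomputable def baseSize (G : SimpleGraph V) : ℕ :=
  sInf {k | ∃ B : Set V, B.ncard = k ∧ IsBase G B}

/-- Closed twins: adjacent vertices with the same closed neighbourhood. -/
def ClosedTwins (G : SimpleGraph V) (v w : V) : Prop :=
  v ≠ w ∧ G.Adj v w ∧ (G.neighborSet v ∪ {v}) = (G.neighborSet w ∪ {w})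

/-- Open twins: non-adjacent vertices with the same open neighbourhood. -/
def OpenTwins (G : SimpleGraph V) (v w : V) : Prop :=
  v ≠ w ∧ ¬ G.Adj v w ∧ G.neighborSet v = G.neighborSet w

/-- The twin relation: equality or being twins. -/
def twinRel (G : SimpleGraph V) (u v : V) : Prop := u = v ∨ Twins G u v

lemma Twins.symm {G : SimpleGraph V} {v w : V} (h : Twins G v w) : Twins G w v :=
  ⟨h.1.symm, h.2.symm⟩

lemma twins_adj_iff {G : SimpleGraph V} {v w u : V} (h : Twins G v w)
    (huv : u ≠ v) (huw : u ≠ w) : G.Adj u v ↔ G.Adj u w := by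
  have := Set.ext_iff.mp h.2 u
  simp only [Set.mem_diff, SimpleGraph.mem_neighborSet, Set.mem_singleton_iff] at this
  constructor
  · intro hadj
    exact ((this.mp ⟨hadj.symm, huw⟩).1).symm
  · intro hadj
    exact ((this.mpr ⟨hadj.symm, huv⟩).1).symm

lemma twins_dist_le {G : SimpleGraph V} (hc : G.Connected) {v w u : V} (h : Twins G v w)
    (huv : u ≠ v) (huw : u ≠ w) : G.dist u w ≤ G.dist u v := by
  obtain ⟨p, hp⟩ := hc.exists_walk_length_eq_dist v u
  cases p with
  | nil => exact absurd rfl huv.symm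
  | cons hadj q =>
    rename_i z
    have hlen : q.length + 1 = G.dist v u := by simpa using hp
    by_cases hzw : z = w
    · have h1 := SimpleGraph.dist_le q
      replace h1 : G.dist w u ≤ q.length := by rw [← hzw]; exact h1
      rw [SimpleGraph.dist_comm (u := u) (v := w), SimpleGraph.dist_comm (u := u) (v := v)]
      omega
    · have hzv : z ≠ v := hadj.ne'
      have hzw' : G.Adj z w := (twins_adj_iff h hzv hzw).mp hadj.symm
      have h1 := SimpleGraph.dist_le (SimpleGraph.Walk.cons hzw'.symm q)
      simp only [SimpleGraph.Walk.length_cons] at h1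
      rw [SimpleGraph.dist_comm (u := u) (v := w), SimpleGraph.dist_comm (u := u) (v := v)]
      omega

lemma twins_dist {G : SimpleGraph V} (hc : G.Connected) {v w u : V} (h : Twins G v w)
    (huv : u ≠ v) (huw : u ≠ w) : G.dist u v = G.dist u w :=
  le_antisymm (twins_dist_le hc h.symm huw huv) (twins_dist_le hc h huv huw)


lemma twins_swap_adj {G : SimpleGraph V} [DecidableEq V] {v w : V} (h : Twins G v w) :
    ∀ a b, G.Adj a b → G.Adj (Equiv.swap v w a) (Equiv.swap v w b) := by
  intro a b hab
  rcases eq_or_ne a v with rfl | hav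
  · rw [Equiv.swap_apply_left]
    rcases eq_or_ne b w with rfl | hbw
    · rw [Equiv.swap_apply_right]; exact hab.symm
    · have hbv : b ≠ a := hab.ne'
      rw [Equiv.swap_apply_of_ne_of_ne hbv hbw]
      exact ((twins_adj_iff h hbv hbw).mp hab.symm).symm
  · rcases eq_or_ne a w with rfl | haw
    · rw [Equiv.swap_apply_right]
      rcases eq_or_ne b v with rfl | hbv
      · rw [Equiv.swap_apply_left]; exact hab.symm
      · have hbw : b ≠ a := hab.ne'
        rw [Equiv.swap_apply_of_ne_of_ne hbv hbw]
        exact ((twins_adj_iff h hbv hbw).mpr hab.symm).symm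
    · rw [Equiv.swap_apply_of_ne_of_ne hav haw]
      rcases eq_or_ne b v with rfl | hbv
      · rw [Equiv.swap_apply_left]
        exact ((twins_adj_iff h hav haw).mp hab)
      · rcases eq_or_ne b w with rfl | hbw
        · rw [Equiv.swap_apply_right]
          exact ((twins_adj_iff h hav haw).mpr hab)
        · rw [Equiv.swap_apply_of_ne_of_ne hbv hbw]
          exact hab

noncomputable def twinSwap {G : SimpleGraph V} {v w : V} (h : Twins G v w) : G ≃g G :=
  letI := Classical.decEq V
  { toEquiv := Equiv.swap v w
    map_rel_iff' := by
      intro a b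
      constructor
      · intro hab
        have h2 := twins_swap_adj h _ _ hab
        simpa using h2
      · exact twins_swap_adj h a b }

lemma twinSwap_apply {G : SimpleGraph V} {v w : V} (h : Twins G v w) (a : V) :
    twinSwap h a = (letI := Classical.decEq V; Equiv.swap v w a) := rfl

theorem dims_of_graph_all_twins [Fintype V] (G : SimpleGraph V) (hc : G.Connected)
    (hequiv : Equivalence (twinRel G))
    (htwin : ∀ v : V, ∃ w, Twins G v w)
    (n r : ℕ) (hn : Fintype.card V = n)
    (hr : Nat.card (Quotient (⟨twinRel G, hequiv⟩ : Setoid V)) = r) :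
    baseSize G = n - r ∧ metricDim G = n - r ∧ adjDim G = n - r := by
  classical
  set s : Setoid V := ⟨twinRel G, hequiv⟩ with hsdef
  set T : Set V := Set.range (Quotient.out (s := s)) with hTdef
  set S : Set V := Tᶜ with hSdef
  have hmemS : ∀ v : V, v ∈ S ↔ v ∉ T := fun v => Iff.rfl
  have hTcard : T.ncard = r := by
    rw [← Nat.card_coe_set_eq, hTdef, Nat.card_range_of_injective Quotient.out_injective, hr]
  have hScard : S.ncard = n - r := by
    have h2 := Set.ncard_add_ncard_compl T
    rw [Nat.card_eq_fintype_card, hn, ← hSdef] at h2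
    omega
  -- uniqueness of representatives in T
  have hTuniq : ∀ x y : V, x ∈ T → y ∈ T → twinRel G x y → x = y := by
    rintro x y ⟨p, rfl⟩ ⟨q, rfl⟩ hrel
    have : Quotient.mk s p.out = Quotient.mk s q.out := Quotient.sound hrel
    rw [Quotient.out_eq, Quotient.out_eq] at this
    rw [this]
  -- every vertex has a representative (itself or a twin) in S
  have hSrep : ∀ z : V, ∃ u ∈ S, z = u ∨ Twins G z u := by
    intro z
    by_cases hz : z ∈ S
    · exact ⟨z, hz, Or.inl rfl⟩
    · obtain ⟨u, hu⟩ := htwin z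
      refine ⟨u, ?_, Or.inr hu⟩
      rw [hmemS]
      intro huT
      have hzT : z ∈ T := not_not.mp ((hmemS z).not.mp (by simpa using hz)).elim
      exact hu.1 (hTuniq z u hzT huT (Or.inr hu))
  -- key separation lemma
  have hkey : ∀ x y : V, x ∈ T → y ∈ T → x ≠ y →
      ∃ u ∈ S, u ≠ x ∧ u ≠ y ∧ ¬ (G.Adj x u ↔ G.Adj y u) := by
    intro x y hx hy hxy
    have hnt : ¬ Twins G x y := fun ht => hxy (hTuniq x y hx hy (Or.inr ht))
    have hne : G.neighborSet x \ {y} ≠ G.neighborSet y \ {x} := fun he => hnt ⟨hxy, he⟩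
    obtain ⟨z, hz⟩ : ∃ z, ¬ (z ∈ G.neighborSet x \ {y} ↔ z ∈ G.neighborSet y \ {x}) := by
      by_contra hcon
      push_neg at hcon
      exact hne (Set.ext fun z => (hcon z))
    simp only [Set.mem_diff, SimpleGraph.mem_neighborSet, Set.mem_singleton_iff] at hz
    have hzx : z ≠ x := by rintro rfl; simp at hz
    have hzy : z ≠ y := by rintro rfl; simp at hz
    have hz' : ¬ (G.Adj x z ↔ G.Adj y z) := by
      simp only [hzx, hzy, ne_eq, not_false_iff, and_true] at hz
      exact hz
    obtain ⟨u, huS, hcase⟩ := hSrep z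
    rcases hcase with rfl | ht
    · exact ⟨z, huS, hzx, hzy, hz'⟩
    · have hux : u ≠ x := by rintro rfl; exact ((hmemS u).mp huS) hx
      have huy : u ≠ y := by rintro rfl; exact ((hmemS u).mp huS) hy
      refine ⟨u, huS, hux, huy, fun hiff => hz' ?_⟩
      rw [twins_adj_iff ht hzx.symm hux.symm, twins_adj_iff ht hzy.symm huy.symm]
      exact hiff
  -- criterion for min-dist-2 = 1
  have hmm : ∀ a u : V, a ≠ u → (G.Adj a u ↔ min (G.dist a u) 2 = 1) := by
    intro a u hau
    constructor
    · intro h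
      rw [SimpleGraph.dist_eq_one_iff_adj.mpr h]
      simp
    · intro h
      have hd : G.dist a u = 1 := by
        rw [Nat.min_def] at h
        split_ifs at h <;> omega
      exact SimpleGraph.dist_eq_one_iff_adj.mp hd
  -- S is adjacency resolving
  have hSadj : AdjResolves G S := by
    intro x y hxy
    by_contra hne
    have hnotS : ∀ a b : V, a ≠ b → (∀ u ∈ S, min (G.dist a u) 2 = min (G.dist b u) 2) → a ∉ S := by
      intro a b hab hsame haS
      have h0 := hsame a haS
      rw [SimpleGraph.dist_self] at h0
      have hd : G.dist b a = 0 := by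
        rw [Nat.min_def] at h0
        split_ifs at h0 <;> omega
      exact hab ((hc.dist_eq_zero_iff.mp hd)).symm
    have hxT : x ∈ T := not_not.mp ((hmemS x).not.mp (by simp [hnotS x y hne hxy]))
    have hyT : y ∈ T := not_not.mp ((hmemS y).not.mp (by
      simp [hnotS y x (Ne.symm hne) (fun u hu => (hxy u hu).symm)]))
    obtain ⟨u, huS, hux, huy, hiff⟩ := hkey x y hxT hyT hne
    apply hiff
    rw [hmm x u hux.symm, hmm y u huy.symm, hxy u huS]
  -- S is resolving
  have hSres : Resolves G S := fun x y h => hSadj x y (fun u hu => by rw [h u hu])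
  -- S is a base
  have hSbase : IsBase G S := by
    intro φ hfix
    have hφT : ∀ t : V, t ∉ S → φ t ∉ S := by
      intro t htS hφtS
      have h1 : φ (φ t) = φ t := hfix (φ t) hφtS
      have h2 : φ t = t := φ.injective h1
      exact htS (h2 ▸ hφtS)
    intro v
    by_contra hvne
    have hvS : v ∉ S := fun h => hvne (hfix v h)
    have hv'S : φ v ∉ S := hφT v hvS
    have hvT : v ∈ T := not_not.mp hvS
    have hv'T : φ v ∈ T := not_not.mp hv'S
    obtain ⟨u, huS, hux, huy, hiff⟩ := hkey v (φ v) hvT hv'T (Ne.symm hvne)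
    apply hiff
    calc G.Adj v u ↔ G.Adj (φ v) (φ u) := φ.map_adj_iff.symm
      _ ↔ G.Adj (φ v) u := by rw [hfix u huS]
  -- lower bound
  have hlow : ∀ B : Set V,
      (∀ v w : V, Twins G v w → v ∉ B → w ∉ B → False) → n - r ≤ B.ncard := by
    intro B hB
    have h1 : Bᶜ.ncard ≤ r := by
      rw [← Nat.card_coe_set_eq, ← hr]
      refine Nat.card_le_card_of_injective (fun x => Quotient.mk s x.1) ?_
      rintro ⟨a, ha⟩ ⟨b, hb⟩ hab
      have hrel : twinRel G a b := Quotient.exact hab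
      rcases hrel with heq | ht
      · exact Subtype.ext heq
      · exact absurd (hB a b ht ha hb) not_false
    have h2 := Set.ncard_add_ncard_compl B
    rw [Nat.card_eq_fintype_card, hn] at h2
    omega
  -- twins can't both be missing from resolving / adj-resolving / base sets
  have hmissR : ∀ B : Set V, Resolves G B →
      ∀ v w : V, Twins G v w → v ∉ B → w ∉ B → False := by
    intro B hres v w ht hv hw
    apply ht.1
    apply hres v w
    intro u hu
    have huv : u ≠ v := fun h => hv (h ▸ hu)
    have huw : u ≠ w := fun h => hw (h ▸ hu)
    rw [SimpleGraph.dist_comm (u := v), SimpleGraph.dist_comm (u := w)]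
    exact twins_dist hc ht huv huw
  have hmissA : ∀ B : Set V, AdjResolves G B →
      ∀ v w : V, Twins G v w → v ∉ B → w ∉ B → False := by
    intro B hres v w ht hv hw
    apply ht.1
    apply hres v w
    intro u hu
    have huv : u ≠ v := fun h => hv (h ▸ hu)
    have huw : u ≠ w := fun h => hw (h ▸ hu)
    rw [SimpleGraph.dist_comm (u := v), SimpleGraph.dist_comm (u := w),
      twins_dist hc ht huv huw]
  have hmissB : ∀ B : Set V, IsBase G B →
      ∀ v w : V, Twins G v w → v ∉ B → w ∉ B → False := by
    intro B hbase v w ht hv hw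
    have hfix : ∀ u ∈ B, twinSwap ht u = u := by
      intro u hu
      have huv : u ≠ v := fun h => hv (h ▸ hu)
      have huw : u ≠ w := fun h => hw (h ▸ hu)
      rw [twinSwap_apply]
      exact Equiv.swap_apply_of_ne_of_ne huv huw
    have := hbase (twinSwap ht) hfix v
    rw [twinSwap_apply] at this
    simp only [Equiv.swap_apply_left] at this
    exact ht.1 this.symm
  -- conclude
  have hgen : ∀ (P : Set V → Prop), P S →
      (∀ B : Set V, P B → ∀ v w : V, Twins G v w → v ∉ B → w ∉ B → False) →
      sInf {k | ∃ B : Set V, B.ncard = k ∧ P B} = n - r := by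
    intro P hPS hPmiss
    have hmem : (n - r) ∈ {k | ∃ B : Set V, B.ncard = k ∧ P B} := ⟨S, hScard, hPS⟩
    refine le_antisymm (Nat.sInf_le hmem) ?_
    obtain ⟨B, hBc, hPB⟩ := Nat.sInf_mem (⟨n - r, hmem⟩ : Set.Nonempty _)
    rw [← hBc]
    exact hlow B (hPmiss B hPB)
  exact ⟨hgen (IsBase G) hSbase hmissB, hgen (Resolves G) hSres hmissR,
    hgen (AdjResolves G) hSadj hmissA⟩
end

section
/- Let Γ be a finite connected simple graph on n vertices in which every vertex has a twin, with r twin equivalence classes. Then any set consisting of all but one vertex from each twin equivalence class is an adjacency resolving set of size n − r. -/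
open SimpleGraph

variable {V : Type*}

theorem transversal_complement_adjResolves [Fintype V] (G : SimpleGraph V) (hc : G.Connected)
    (hequiv : Equivalence (twinRel G))
    (htwin : ∀ v : V, ∃ w, Twins G v w)
    (n r : ℕ) (hn : Fintype.card V = n)
    (hr : Nat.card (Quotient (⟨twinRel G, hequiv⟩ : Setoid V)) = r)
    (S : Set V) (hS : ∀ v : V, ∃! w, twinRel G v w ∧ w ∉ S) :
    AdjResolves G S ∧ S.ncard = n - r := by
  have hd0 : ∀ a b : V, G.dist a b = 0 ↔ a = b := by
    intro a b
    rw [SimpleGraph.dist_eq_zero_iff_eq_or_not_reachable]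
    simp [hc.preconnected a b]
  -- every vertex not in S: all its twins are in S
  have htwinS : ∀ u : V, u ∉ S → ∀ t : V, Twins G u t → t ∈ S := by
    intro u hu t ht
    obtain ⟨w, hw, huniq⟩ := hS u
    have hwu : u = w := huniq u ⟨hequiv.refl u, hu⟩
    by_contra htS
    have : t = w := huniq t ⟨Or.inr ht, htS⟩
    exact ht.1 (hwu.trans this.symm)
  constructor
  · intro x y h
    by_contra hxy
    -- basic consequences of equal truncated distances
    have key : ∀ u ∈ S, (x = u ↔ y = u) ∧ (G.Adj x u ↔ G.Adj y u) := by
      intro u hu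
      have hmin := h u hu
      have h0 : G.dist x u = 0 ↔ G.dist y u = 0 := by omega
      have h1 : G.dist x u = 1 ↔ G.dist y u = 1 := by omega
      rw [hd0, hd0] at h0
      rw [SimpleGraph.dist_eq_one_iff_adj, SimpleGraph.dist_eq_one_iff_adj] at h1
      exact ⟨h0, h1⟩
    have hxS : x ∉ S := by
      intro hx
      exact hxy ((key x hx).1.mp rfl).symm
    have hyS : y ∉ S := by
      intro hy
      exact hxy ((key y hy).1.mpr rfl)
    -- adjacency agreement off {x, y}
    have hadj : ∀ u : V, u ≠ x → u ≠ y → (G.Adj x u ↔ G.Adj y u) := by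
      intro u hux huy
      by_cases hu : u ∈ S
      · exact (key u hu).2
      · obtain ⟨t, ht⟩ := htwin u
        have htS : t ∈ S := htwinS u hu t ht
        have htx : t ≠ x := fun he => hxS (he ▸ htS)
        have hty : t ≠ y := fun he => hyS (he ▸ htS)
        have hset := ht.2
        have e1 : G.Adj x u ↔ G.Adj x t := by
          constructor
          · intro hxu
            have : x ∈ G.neighborSet u \ {t} := ⟨hxu.symm, fun hxt => htx (Set.eq_of_mem_singleton hxt).symm⟩
            rw [hset] at this
            exact this.1.symm
          · intro hxt
            have : x ∈ G.neighborSet t \ {u} := ⟨hxt.symm, fun hxu => hux (Set.eq_of_mem_singleton hxu).symm⟩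
            rw [← hset] at this
            exact this.1.symm
        have e2 : G.Adj y u ↔ G.Adj y t := by
          constructor
          · intro hyu
            have : y ∈ G.neighborSet u \ {t} := ⟨hyu.symm, fun hyt => hty (Set.eq_of_mem_singleton hyt).symm⟩
            rw [hset] at this
            exact this.1.symm
          · intro hyt
            have : y ∈ G.neighborSet t \ {u} := ⟨hyt.symm, fun hyu => huy (Set.eq_of_mem_singleton hyu).symm⟩
            rw [← hset] at this
            exact this.1.symm
        rw [e1, e2]
        exact (key t htS).2
    -- x and y are twins
    have hxyTwins : Twins G x y := by
      refine ⟨hxy, ?_⟩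
      ext a
      simp only [Set.mem_diff, SimpleGraph.mem_neighborSet, Set.mem_singleton_iff]
      by_cases hax : a = x
      · subst hax
        simp [G.irrefl]
      · by_cases hay : a = y
        · subst hay
          constructor
          · rintro ⟨_, h'⟩; exact absurd rfl h'
          · rintro ⟨h', _⟩; exact absurd h' (G.irrefl)
        · constructor
          · rintro ⟨h', _⟩; exact ⟨(hadj a hax hay).mp h', hax⟩
          · rintro ⟨h', _⟩; exact ⟨(hadj a hax hay).mpr h', hay⟩
    obtain ⟨w, hw, huniq⟩ := hS x
    have h1 : x = w := huniq x ⟨hequiv.refl x, hxS⟩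
    have h2 : y = w := huniq y ⟨Or.inr hxyTwins, hyS⟩
    exact hxy (h1.trans h2.symm)
  · -- cardinality
    set st : Setoid V := ⟨twinRel G, hequiv⟩ with hst
    have e : (Sᶜ : Set V) ≃ Quotient st := by
      refine Equiv.ofBijective (fun t => Quotient.mk st t.1) ⟨?_, ?_⟩
      · rintro ⟨t1, ht1⟩ ⟨t2, ht2⟩ hq
        have hrel : twinRel G t1 t2 := Quotient.exact hq
        obtain ⟨w, hw, huniq⟩ := hS t1
        have e1 : t1 = w := huniq t1 ⟨hequiv.refl t1, ht1⟩
        have e2 : t2 = w := huniq t2 ⟨hrel, ht2⟩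
        exact Subtype.ext (e1.trans e2.symm)
      · intro q
        induction q using Quotient.ind with
        | _ v =>
          obtain ⟨w, ⟨hrel, hwS⟩, _⟩ := hS v
          exact ⟨⟨w, hwS⟩, Quotient.sound (hequiv.symm hrel)⟩
    have hcompl : (Sᶜ : Set V).ncard = r := by
      rw [← Nat.card_coe_set_eq, Nat.card_congr e, hr]
    have hsum : S.ncard + (Sᶜ : Set V).ncard = Fintype.card V := by
      simpa [Nat.card_eq_fintype_card] using Set.ncard_add_ncard_compl S
    omega
end

section
/- Let Γ be a connected graph on n even vertices, n > 4, whose complement is a perfect matching (a 1-factor); equivalently Γ is (n−2)-regular. Then the metric dimension of Γ equals n/2. -/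
open SimpleGraph

variable {V : Type*}

def pairSetoid (p : V → V) (hinv : ∀ v, p (p v) = v) : Setoid V :=
  ⟨fun v w => w = v ∨ w = p v, by
    constructor
    · intro v; exact Or.inl rfl
    · rintro v w (rfl | rfl)
      · exact Or.inl rfl
      · right; rw [hinv]
    · rintro v w x (rfl | rfl) (rfl | rfl)
      · exact Or.inl rfl
      · exact Or.inr rfl
      · exact Or.inr rfl
      · left; rw [hinv]⟩

theorem metricDim_complement_perfect_matching [Fintype V] (G : SimpleGraph V)
    (n : ℕ) (hn : Fintype.card V = n) (heven : Even n) (hn4 : 4 < n)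
    (hc : G.Connected)
    (hmatch : ∀ v : V, ∃! w, w ≠ v ∧ ¬ G.Adj v w) :
    metricDim G = n / 2 := by
  classical
  -- the pairing function
  choose p hp hup using hmatch
  have hpne : ∀ v, p v ≠ v := fun v => (hp v).1
  have hpnadj : ∀ v, ¬ G.Adj v (p v) := fun v => (hp v).2
  have hinv : ∀ v, p (p v) = v := by
    intro v
    exact (hup (p v) v ⟨(hpne v).symm, fun h => hpnadj v h.symm⟩).symm
  have hpinj : Function.Injective p := Function.LeftInverse.injective hinv
  -- adjacency characterization
  have hadj : ∀ v w, G.Adj v w ↔ w ≠ v ∧ w ≠ p v := by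
    intro v w
    constructor
    · intro h
      refine ⟨h.ne', fun hw => ?_⟩
      exact hpnadj v (hw ▸ h)
    · rintro ⟨h1, h2⟩
      by_contra hna
      exact h2 (hup v w ⟨h1, hna⟩)
  -- distance facts
  have hd1 : ∀ v w, w ≠ v → w ≠ p v → G.dist v w = 1 := by
    intro v w h1 h2
    exact dist_eq_one_iff_adj.mpr ((hadj v w).mpr ⟨h1, h2⟩)
  have hthird : ∀ v : V, ∃ u, u ≠ v ∧ u ≠ p v := by
    intro v
    by_contra h
    push_neg at h
    have hsub : (Finset.univ : Finset V) ⊆ {v, p v} := by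
      intro u _
      rcases Classical.em (u = v) with rfl | hu
      · simp
      · simp [h u hu]
    have hcc := Finset.card_le_card hsub
    rw [Finset.card_univ, hn] at hcc
    have h2 : ({v, p v} : Finset V).card ≤ 2 := Finset.card_insert_le _ _ |>.trans (by simp)
    omega
  have hd2 : ∀ v, G.dist v (p v) = 2 := by
    intro v
    obtain ⟨u, hu1, hu2⟩ := hthird v
    have a1 : G.Adj v u := (hadj v u).mpr ⟨hu1, hu2⟩
    have a2 : G.Adj u (p v) := by
      have : G.Adj (p v) u := (hadj (p v) u).mpr ⟨hu2, by rw [hinv]; exact hu1⟩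
      exact this.symm
    have hle : G.dist v (p v) ≤ 2 := by
      have := SimpleGraph.dist_le (Walk.cons a1 (Walk.cons a2 Walk.nil))
      simpa using this
    have hpos : 0 < G.dist v (p v) := hc.pos_dist_of_ne (hpne v).symm
    have hne1 : G.dist v (p v) ≠ 1 := by
      intro h
      exact hpnadj v (dist_eq_one_iff_adj.mp h)
    omega
  -- resolving characterization
  have hres : ∀ W : Set V, Resolves G W ↔ ∀ v, v ∈ W ∨ p v ∈ W := by
    intro W
    constructor
    · intro hR v
      by_contra h
      push_neg at h
      have : v = p v := by
        apply hR
        intro u hu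
        have hu1 : u ≠ v := fun e => h.1 (e ▸ hu)
        have hu2 : u ≠ p v := fun e => h.2 (e ▸ hu)
        rw [hd1 v u hu1 hu2, hd1 (p v) u hu2 (by rw [hinv]; exact hu1)]
      exact hpne v this.symm
    · intro hW x y hxy
      by_contra hne
      rcases hW x with hx | hpx
      · have := hxy x hx
        rw [SimpleGraph.dist_self] at this
        have := hc.pos_dist_of_ne (Ne.symm hne) (u := y) (v := x)
        omega
      · have h2 := hxy (p x) hpx
        rw [hd2 x] at h2
        rcases Classical.em (y = p x) with rfl | hy
        · rw [SimpleGraph.dist_self] at h2; omega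
        · have : p x ≠ p y := fun e => hne (hpinj e)
          rw [hd1 y (p x) (Ne.symm hy) this] at h2
          omega
  -- cardinality lower bound for hitting sets
  have hcard_ge : ∀ W : Set V, (∀ v, v ∈ W ∨ p v ∈ W) → n ≤ 2 * W.ncard := by
    intro W hW
    have hsub : p '' Wᶜ ⊆ W := by
      rintro _ ⟨u, hu, rfl⟩
      rcases hW u with h | h
      · exact absurd h hu
      · exact h
    have h1 : (Wᶜ : Set V).ncard ≤ W.ncard := by
      have := Set.ncard_le_ncard hsub (Set.toFinite W)
      rwa [Set.ncard_image_of_injective _ hpinj] at this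
    have h2 : W.ncard + (Wᶜ : Set V).ncard = n := by
      rw [Set.ncard_add_ncard_compl, Nat.card_eq_fintype_card, hn]
    omega
  -- the transversal
  set s := pairSetoid p hinv with hs
  set W₀ : Set V := Set.range (Quotient.out (s := s)) with hW₀def
  have hout : ∀ v : V, (Quotient.mk s v).out = v ∨ (Quotient.mk s v).out = p v := by
    intro v
    have h := Quotient.exact (s := s) (Quotient.out_eq (Quotient.mk s v))
    rcases h with h | h
    · exact Or.inl h.symm
    · right
      have h2 := congrArg p h
      rw [hinv] at h2
      exact h2.symm
  have hmkp : ∀ v : V, Quotient.mk s (p v) = Quotient.mk s v := by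
    intro v
    exact Quotient.sound (Or.inr (hinv v).symm)
  have hqeq : ∀ (q : Quotient s) (v : V), q.out = v ∨ q.out = p v → q = Quotient.mk s v := by
    intro q v h
    rcases h with h | h
    · rw [← Quotient.out_eq q, h]
    · rw [← Quotient.out_eq q, h, hmkp]
  have hiff : ∀ v, v ∈ W₀ ↔ p v ∉ W₀ := by
    intro v
    constructor
    · rintro ⟨q, hq⟩ ⟨q', hq'⟩
      have e1 := hqeq q v (Or.inl hq)
      have e2 := hqeq q' v (Or.inr hq')
      rw [e1] at hq; rw [e2] at hq'
      exact hpne v ((hq.symm.trans hq').symm)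
    · intro h
      rcases hout v with h1 | h1
      · exact ⟨_, h1⟩
      · exact absurd ⟨_, h1⟩ h
  have hhit₀ : ∀ v, v ∈ W₀ ∨ p v ∈ W₀ := by
    intro v
    rcases Classical.em (v ∈ W₀) with h | h
    · exact Or.inl h
    · right
      rcases hout v with h1 | h1
      · exact absurd ⟨_, h1⟩ h
      · exact ⟨_, h1⟩
  have himg : p '' (W₀ᶜ) = W₀ := by
    ext z
    constructor
    · rintro ⟨u, hu, rfl⟩
      rcases hhit₀ u with h | h
      · exact absurd h hu
      · exact h
    · intro hz
      refine ⟨p z, ?_, hinv z⟩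
      intro hpz
      exact (hiff (p z)).mp hpz (by rwa [hinv])
  have hcard₀ : W₀.ncard = n / 2 := by
    have h1 : (W₀ᶜ : Set V).ncard = W₀.ncard := by
      rw [← Set.ncard_image_of_injective (W₀ᶜ) hpinj, himg]
    have h2 : W₀.ncard + (W₀ᶜ : Set V).ncard = n := by
      rw [Set.ncard_add_ncard_compl, Nat.card_eq_fintype_card, hn]
    obtain ⟨m, hm⟩ := heven
    omega
  -- conclude
  have hmem : n / 2 ∈ {k | ∃ W : Set V, W.ncard = k ∧ Resolves G W} :=
    ⟨W₀, hcard₀, (hres W₀).mpr hhit₀⟩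
  apply le_antisymm
  · exact Nat.sInf_le hmem
  · apply le_csInf ⟨_, hmem⟩
    rintro k ⟨W, rfl, hRW⟩
    have := hcard_ge W ((hres W).mp hRW)
    obtain ⟨m, hm⟩ := heven
    omega
end

section
/- Let Γ be a graph on n vertices whose complement is a perfect matching (n even, n > 4). Then the base size, metric dimension, and adjacency dimension of Γ are all equal to n/2. -/
open SimpleGraph

variable {V : Type*}

theorem dims_complement_perfect_matching [Fintype V] (G : SimpleGraph V)
    (n : ℕ) (hn : Fintype.card V = n) (heven : Even n) (hn4 : 4 < n)
    (hmatch : ∀ v : V, ∃! w, w ≠ v ∧ ¬ G.Adj v w) :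
    baseSize G = n / 2 ∧ metricDim G = n / 2 ∧ adjDim G = n / 2 := by
  classical
  choose m hm1 hm2 using hmatch
  have hne : ∀ v : V, m v ≠ v := fun v => (hm1 v).1
  have hnadj : ∀ v : V, ¬ G.Adj v (m v) := fun v => (hm1 v).2
  have huniq : ∀ v w : V, w ≠ v → ¬ G.Adj v w → w = m v := fun v w h1 h2 => hm2 v w ⟨h1, h2⟩
  have hmm : ∀ v : V, m (m v) = v := fun v =>
    (huniq (m v) v (Ne.symm (hne v)) (fun h => hnadj v h.symm)).symm
  have hminj : Function.Injective m := fun a b h => by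
    have := congrArg m h; rwa [hmm, hmm] at this
  have hadj : ∀ v w : V, G.Adj v w ↔ w ≠ v ∧ w ≠ m v := by
    intro v w
    constructor
    · intro h
      refine ⟨h.ne', fun hw => ?_⟩
      exact hnadj v (hw ▸ h)
    · rintro ⟨h1, h2⟩
      by_contra h
      exact h2 (huniq v w h1 h)
  -- existence of a third vertex
  have hthird : ∀ x y : V, ∃ u : V, u ≠ x ∧ u ≠ y := by
    intro x y
    by_contra h
    push_neg at h
    have hsub : (Finset.univ : Finset V) ⊆ {x, y} := by
      intro u _
      by_cases hux : u = x
      · simp [hux]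
      · simp [h u hux]
    have h1 := Finset.card_le_card hsub
    have h2 : ({x, y} : Finset V).card ≤ 2 := (Finset.card_insert_le _ _).trans (by simp)
    rw [Finset.card_univ, hn] at h1
    omega
  -- distance formula
  have hdist : ∀ x y : V, G.dist x y = if x = y then 0 else if y = m x then 2 else 1 := by
    intro x y
    split_ifs with h1 h2
    · subst h1; exact SimpleGraph.dist_self
    · subst h2
      obtain ⟨u, hu1, hu2⟩ := hthird x (m x)
      have a1 : G.Adj x u := (hadj x u).2 ⟨hu1, hu2⟩
      have a2 : G.Adj u (m x) :=
        (hadj u (m x)).2 ⟨Ne.symm hu2, fun h => hu1 (hminj h).symm⟩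
      have hle : G.dist x (m x) ≤ 2 := by
        simpa using SimpleGraph.dist_le
          (SimpleGraph.Walk.cons a1 (SimpleGraph.Walk.cons a2 SimpleGraph.Walk.nil))
      have hr : G.Reachable x (m x) :=
        ⟨SimpleGraph.Walk.cons a1 (SimpleGraph.Walk.cons a2 SimpleGraph.Walk.nil)⟩
      have h0 : G.dist x (m x) ≠ 0 := by
        simp only [ne_eq, hr.dist_eq_zero_iff]
        exact fun h => hne x h.symm
      have hone : G.dist x (m x) ≠ 1 := by
        simp only [ne_eq, SimpleGraph.dist_eq_one_iff_adj]
        exact hnadj x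
      omega
    · exact SimpleGraph.dist_eq_one_iff_adj.2 ((hadj x y).2 ⟨Ne.symm h1, h2⟩)
  have hdle2 : ∀ x y : V, G.dist x y ≤ 2 := by
    intro x y; rw [hdist]; split_ifs <;> omega
  -- the hitting property
  have hres_of_hits : ∀ S : Set V, (∀ v : V, v ∈ S ∨ m v ∈ S) → Resolves G S := by
    intro S hS x y h
    rcases hS x with hx | hx
    · have hh := h x hx
      rw [SimpleGraph.dist_self, hdist] at hh
      split_ifs at hh with h1 h2 <;> first | exact h1.symm | omega
    · have hh := h (m x) hx
      rw [hdist, hdist] at hh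
      by_contra hxy
      split_ifs at hh <;>
        first
          | omega
          | exact hne x (by assumption : x = m x).symm
          | exact hxy (hminj (by assumption : m x = m y))
          | exact absurd rfl (by assumption : ¬ m x = m x)
  have hadjres_of_hits : ∀ S : Set V, (∀ v : V, v ∈ S ∨ m v ∈ S) → AdjResolves G S := by
    intro S hS x y h
    refine hres_of_hits S hS x y fun u hu => ?_
    have hh := h u hu
    rwa [min_eq_left (hdle2 x u), min_eq_left (hdle2 y u)] at hh
  have hbase_of_hits : ∀ S : Set V, (∀ v : V, v ∈ S ∨ m v ∈ S) → IsBase G S := by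
    intro S hS φ hfix v
    rcases hS v with hv | hv
    · exact hfix v hv
    · have h1 : φ (m v) = m v := hfix _ hv
      have h2 : ¬ G.Adj (φ v) (m v) := by
        rw [← h1]
        intro h
        exact hnadj v (φ.map_adj_iff.mp h)
      have h3 : φ v ≠ m v := by
        rw [← h1]
        exact fun h => hne v (φ.injective h).symm
      have h4 := huniq (m v) (φ v) h3 (fun h => h2 h.symm)
      rwa [hmm] at h4
  -- hitting from resolving
  have hits_of_res : ∀ S : Set V, Resolves G S → ∀ v : V, v ∈ S ∨ m v ∈ S := by
    intro S hS v
    by_contra h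
    push_neg at h
    obtain ⟨h1, h2⟩ := h
    have hd := hS v (m v) (fun u hu => by
      have hu1 : u ≠ v := fun h => h1 (h ▸ hu)
      have hu2 : u ≠ m v := fun h => h2 (h ▸ hu)
      rw [hdist, hdist, hmm, if_neg (fun h : v = u => hu1 h.symm), if_neg hu2,
        if_neg (fun h : m v = u => hu2 h.symm), if_neg hu1])
    exact hne v hd.symm
  have hits_of_adjres : ∀ S : Set V, AdjResolves G S → ∀ v : V, v ∈ S ∨ m v ∈ S := by
    intro S hS v
    refine hits_of_res S (fun x y h => hS x y fun u hu => by rw [h u hu]) v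
  -- the swap automorphism
  have hits_of_base : ∀ S : Set V, IsBase G S → ∀ v : V, v ∈ S ∨ m v ∈ S := by
    intro S hS v
    by_contra h
    push_neg at h
    obtain ⟨h1, h2⟩ := h
    have hswap : ∀ x : V, m (Equiv.swap v (m v) x) = Equiv.swap v (m v) (m x) := by
      intro x
      rcases eq_or_ne x v with rfl | hxv
      · rw [Equiv.swap_apply_left, hmm, Equiv.swap_apply_right]
      rcases eq_or_ne x (m v) with rfl | hxm
      · rw [Equiv.swap_apply_right, hmm, Equiv.swap_apply_left]
      · rw [Equiv.swap_apply_of_ne_of_ne hxv hxm,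
          Equiv.swap_apply_of_ne_of_ne (fun hh => hxm (by rw [← hh, hmm]))
            (fun hh => hxv (hminj hh))]
    have hmap : ∀ a b : V,
        G.Adj (Equiv.swap v (m v) a) (Equiv.swap v (m v) b) ↔ G.Adj a b := by
      intro a b
      rw [hadj, hadj, hswap]
      constructor
      · rintro ⟨ha, hb⟩
        exact ⟨fun hh => ha (hh ▸ rfl), fun hh => hb (hh ▸ rfl)⟩
      · rintro ⟨ha, hb⟩
        exact ⟨fun hh => ha ((Equiv.swap v (m v)).injective hh),
          fun hh => hb ((Equiv.swap v (m v)).injective hh)⟩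
    let φ : G ≃g G := ⟨Equiv.swap v (m v), fun {a b} => hmap a b⟩
    have hφ : ∀ x : V, φ x = Equiv.swap v (m v) x := fun x => rfl
    have hfix : ∀ u ∈ S, φ u = u := by
      intro u hu
      have hu1 : u ≠ v := fun h => h1 (h ▸ hu)
      have hu2 : u ≠ m v := fun h => h2 (h ▸ hu)
      rw [hφ]
      exact Equiv.swap_apply_of_ne_of_ne hu1 hu2
    have := hS φ hfix v
    rw [hφ, Equiv.swap_apply_left] at this
    exact hne v this
  -- cardinality lower bound
  have hlow : ∀ S : Set V, (∀ v : V, v ∈ S ∨ m v ∈ S) → n / 2 ≤ S.ncard := by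
    intro S hS
    have hsub : (Set.univ : Set V) ⊆ S ∪ m '' S := by
      intro v _
      rcases hS v with h | h
      · exact Or.inl h
      · exact Or.inr ⟨m v, h, hmm v⟩
    have h1 : n ≤ (S ∪ m '' S).ncard := by
      have := Set.ncard_le_ncard hsub (Set.toFinite _)
      rwa [Set.ncard_univ, Nat.card_eq_fintype_card, hn] at this
    have h2 : (S ∪ m '' S).ncard ≤ S.ncard + (m '' S).ncard := Set.ncard_union_le _ _
    have h3 : (m '' S).ncard = S.ncard := Set.ncard_image_of_injective _ hminj
    omega
  -- construction of an optimal set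
  have hexists : ∃ S : Set V, S.ncard = n / 2 ∧ ∀ v : V, v ∈ S ∨ m v ∈ S := by
    set e := Fintype.equivFin V with he
    refine ⟨{v : V | e v < e (m v)}, ?_, ?_⟩
    · have hcomp : {v : V | e v < e (m v)}ᶜ = m '' {v : V | e v < e (m v)} := by
        ext w
        simp only [Set.mem_compl_iff, Set.mem_setOf_eq, Set.mem_image, not_lt]
        constructor
        · intro hw
          refine ⟨m w, ?_, hmm w⟩
          rw [hmm]
          rcases lt_or_eq_of_le hw with h | h
          · exact h
          · exact absurd (e.injective h) (hne w)
        · rintro ⟨x, hx, rfl⟩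
          rw [hmm]
          exact le_of_lt hx
      have h1 := Set.ncard_add_ncard_compl {v : V | e v < e (m v)}
      rw [hcomp, Set.ncard_image_of_injective _ hminj, Nat.card_eq_fintype_card] at h1
      omega
    · intro v
      rcases lt_trichotomy (e v) (e (m v)) with h | h | h
      · exact Or.inl h
      · exact absurd (e.injective h) (Ne.symm (hne v))
      · refine Or.inr ?_
        simp only [Set.mem_setOf_eq, hmm]
        exact h
  obtain ⟨S, hScard, hShits⟩ := hexists
  have key : ∀ P : Set V → Prop,
      (∀ T : Set V, P T → ∀ v : V, v ∈ T ∨ m v ∈ T) →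
      (∀ T : Set V, (∀ v : V, v ∈ T ∨ m v ∈ T) → P T) →
      sInf {k | ∃ T : Set V, T.ncard = k ∧ P T} = n / 2 := by
    intro P hP1 hP2
    refine le_antisymm (Nat.sInf_le ⟨S, hScard, hP2 S hShits⟩) ?_
    refine le_csInf ⟨n / 2, S, hScard, hP2 S hShits⟩ ?_
    rintro k ⟨T, rfl, hT⟩
    exact hlow T (hP1 T hT)
  exact ⟨key (IsBase G) hits_of_base hbase_of_hits,
    key (Resolves G) hits_of_res hres_of_hits,
    key (AdjResolves G) hits_of_adjres hadjres_of_hits⟩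
end

section
/- Let Γ be the graph on vertex set {u} ∪ {v} ∪ C ∪ D where {u,v} and C ∪ D induce complete graphs, v is adjacent to every vertex of C, u is adjacent to no vertex of C ∪ D, and v is adjacent to no vertex of D, with |C| = n₃ ≥ 3 and |D| = n₄ ≥ 1 (so Γ has diameter 3 with cut vertex v). Then the metric dimension of Γ is n − 3, where n = 2 + n₃ + n₄. -/
open SimpleGraph

variable {V : Type*}

theorem metricDim_diam3_rho1_singleton [Fintype V] (G : SimpleGraph V)
    (u v : V) (C D : Set V) (n n3 n4 : ℕ)
    (hcard : Fintype.card V = n) (hn : n = 2 + n3 + n4)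
    (hC : C.ncard = n3) (hD : D.ncard = n4) (h3 : 3 ≤ n3) (h4 : 1 ≤ n4)
    (huv : u ≠ v) (hu : u ∉ C ∪ D) (hv : v ∉ C ∪ D) (hCD : Disjoint C D)
    (hunion : C ∪ D ∪ {u, v} = Set.univ)
    (hadj : ∀ x z : V, G.Adj x z ↔ x ≠ z ∧
      ((x = u ∧ z = v) ∨ (x = v ∧ z = u) ∨ (x ∈ C ∪ D ∧ z ∈ C ∪ D) ∨
       (x = v ∧ z ∈ C) ∨ (x ∈ C ∧ z = v))) :
    metricDim G = n - 3 := by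
  classical
  have huC : u ∉ C := fun h => hu (Or.inl h)
  have huD : u ∉ D := fun h => hu (Or.inr h)
  have hvC : v ∉ C := fun h => hv (Or.inl h)
  have hvD : v ∉ D := fun h => hv (Or.inr h)
  have hclass : ∀ x : V, x = u ∨ x = v ∨ x ∈ C ∨ x ∈ D := by
    intro x
    have hx : x ∈ C ∪ D ∪ ({u, v} : Set V) := hunion ▸ Set.mem_univ x
    rcases hx with (h | h) | h
    · exact Or.inr (Or.inr (Or.inl h))
    · exact Or.inr (Or.inr (Or.inr h))
    · rcases h with h | h
      · exact Or.inl h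
      · exact Or.inr (Or.inl h)
  -- elements
  obtain ⟨c0, c1, hc0, hc1, hne01⟩ := (Set.one_lt_ncard_iff (Set.toFinite C)).1 (by omega : 1 < C.ncard)
  obtain ⟨d0, hd0⟩ := Set.nonempty_of_ncard_ne_zero (by omega : D.ncard ≠ 0)
  -- adjacency facts
  have adjuv : G.Adj u v := (hadj u v).2 ⟨huv, Or.inl ⟨rfl, rfl⟩⟩
  have adjvc : ∀ c ∈ C, G.Adj v c := fun c hc =>
    (hadj v c).2 ⟨fun h => hvC (by rw [h]; exact hc), Or.inr (Or.inr (Or.inr (Or.inl ⟨rfl, hc⟩)))⟩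
  have adjcd : ∀ x ∈ C ∪ D, ∀ z ∈ C ∪ D, x ≠ z → G.Adj x z := fun x hx z hz hxz =>
    (hadj x z).2 ⟨hxz, Or.inr (Or.inr (Or.inl ⟨hx, hz⟩))⟩
  have hu_only : ∀ z, G.Adj u z → z = v := by
    intro z h
    rcases (hadj u z).1 h with ⟨hne, (⟨_, h1⟩ | ⟨h1, _⟩ | ⟨h1, _⟩ | ⟨h1, _⟩ | ⟨h1, _⟩)⟩
    · exact h1
    · exact absurd h1 huv
    · exact absurd h1 hu
    · exact absurd h1 huv
    · exact absurd (Or.inl h1) hu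
  have nadj_ucd : ∀ z ∈ C ∪ D, ¬ G.Adj u z := fun z hz h => hv (hu_only z h ▸ hz)
  have nadj_vd : ∀ d ∈ D, ¬ G.Adj v d := by
    intro d hd h
    rcases (hadj v d).1 h with ⟨hne, (⟨h1, _⟩ | ⟨_, h1⟩ | ⟨h1, _⟩ | ⟨_, h1⟩ | ⟨h1, _⟩)⟩
    · exact huv h1.symm
    · exact huD (h1 ▸ hd)
    · exact hv h1
    · exact Set.disjoint_left.1 hCD h1 hd
    · exact hvC h1
  -- distance facts
  have dist1 : ∀ x y : V, G.Adj x y → G.dist x y = 1 := fun x y h =>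
    SimpleGraph.dist_eq_one_iff_adj.2 h
  have duv : G.dist u v = 1 := dist1 _ _ adjuv
  have dvc : ∀ c ∈ C, G.dist v c = 1 := fun c hc => dist1 _ _ (adjvc c hc)
  have dcd : ∀ x ∈ C ∪ D, ∀ z ∈ C ∪ D, x ≠ z → G.dist x z = 1 :=
    fun x hx z hz hxz => dist1 _ _ (adjcd x hx z hz hxz)
  have duc : ∀ c ∈ C, G.dist u c = 2 := by
    intro c hc
    have hne : u ≠ c := fun h => huC (h ▸ hc)
    have hle : G.dist u c ≤ 2 := by
      simpa using G.dist_le (Walk.cons adjuv (Walk.cons (adjvc c hc) Walk.nil))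
    have h0 : G.dist u c ≠ 0 := by
      rw [SimpleGraph.dist_ne_zero_iff_ne_and_reachable]
      exact ⟨hne, ⟨Walk.cons adjuv (Walk.cons (adjvc c hc) Walk.nil)⟩⟩
    have h1 : G.dist u c ≠ 1 := fun h =>
      (nadj_ucd c (Or.inl hc)) (SimpleGraph.dist_eq_one_iff_adj.1 h)
    omega
  have dvd' : ∀ d ∈ D, G.dist v d = 2 := by
    intro d hd
    have hne : v ≠ d := fun h => hvD (h ▸ hd)
    have hc1d : c1 ≠ d := fun h => Set.disjoint_left.1 hCD hc1 (h ▸ hd)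
    have hle : G.dist v d ≤ 2 := by
      simpa using G.dist_le (Walk.cons (adjvc c1 hc1)
        (Walk.cons (adjcd c1 (Or.inl hc1) d (Or.inr hd) hc1d) Walk.nil))
    have h0 : G.dist v d ≠ 0 := by
      rw [SimpleGraph.dist_ne_zero_iff_ne_and_reachable]
      exact ⟨hne, ⟨Walk.cons (adjvc c1 hc1)
        (Walk.cons (adjcd c1 (Or.inl hc1) d (Or.inr hd) hc1d) Walk.nil)⟩⟩
    have h1 : G.dist v d ≠ 1 := fun h =>
      (nadj_vd d hd) (SimpleGraph.dist_eq_one_iff_adj.1 h)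
    omega
  have dud : ∀ d ∈ D, G.dist u d = 3 := by
    intro d hd
    have hc1d : c1 ≠ d := fun h => Set.disjoint_left.1 hCD hc1 (h ▸ hd)
    have hle : G.dist u d ≤ 3 := by
      simpa using G.dist_le (Walk.cons adjuv (Walk.cons (adjvc c1 hc1)
        (Walk.cons (adjcd c1 (Or.inl hc1) d (Or.inr hd) hc1d) Walk.nil)))
    have hged : ∀ p : G.Walk u d, 3 ≤ p.length := by
      intro p
      cases p with
      | nil => exact absurd hd huD
      | cons h q =>
        have hb := hu_only _ h
        subst hb
        have h2 := G.dist_le q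
        rw [dvd' d hd] at h2
        simpa [SimpleGraph.Walk.length_cons] using Nat.succ_le_succ h2
    obtain ⟨p, hp⟩ := SimpleGraph.Reachable.exists_walk_length_eq_dist
      (⟨Walk.cons adjuv (Walk.cons (adjvc c1 hc1)
        (Walk.cons (adjcd c1 (Or.inl hc1) d (Or.inr hd) hc1d) Walk.nil))⟩ : G.Reachable u d)
    have := hged p
    omega
  -- flipped distance facts
  have duc' : ∀ c ∈ C, G.dist c u = 2 := fun c hc => (G.dist_comm).trans (duc c hc)
  have dud' : ∀ d ∈ D, G.dist d u = 3 := fun d hd => (G.dist_comm).trans (dud d hd)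
  have dvc' : ∀ c ∈ C, G.dist c v = 1 := fun c hc => (G.dist_comm).trans (dvc c hc)
  have dvd'' : ∀ d ∈ D, G.dist d v = 2 := fun d hd => (G.dist_comm).trans (dvd' d hd)
  -- the resolving set
  set W : Set V := (C \ {c0}) ∪ D with hWdef
  have hc1W : c1 ∈ W := Or.inl ⟨hc1, fun h => hne01 (h.symm)⟩
  have hd0W : d0 ∈ W := Or.inr hd0
  have flip : ∀ x y : V, (∃ w ∈ W, G.dist x w ≠ G.dist y w) →
      ∃ w ∈ W, G.dist y w ≠ G.dist x w := fun x y ⟨w, hw, h⟩ => ⟨w, hw, h.symm⟩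
  have kuv : ∃ w ∈ W, G.dist u w ≠ G.dist v w :=
    ⟨d0, hd0W, by rw [dud d0 hd0, dvd' d0 hd0]; omega⟩
  have kuc : ∀ c ∈ C, ∃ w ∈ W, G.dist u w ≠ G.dist c w := by
    intro c hc
    have hcd0 : c ≠ d0 := fun h => Set.disjoint_left.1 hCD hc (h ▸ hd0)
    exact ⟨d0, hd0W, by
      rw [dud d0 hd0, dcd c (Or.inl hc) d0 (Or.inr hd0) hcd0]; omega⟩
  have kud : ∀ d ∈ D, ∃ w ∈ W, G.dist u w ≠ G.dist d w := by
    intro d hd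
    have hdc1 : d ≠ c1 := fun h => Set.disjoint_left.1 hCD hc1 (h ▸ hd)
    exact ⟨c1, hc1W, by
      rw [duc c1 hc1, dcd d (Or.inr hd) c1 (Or.inl hc1) hdc1]; omega⟩
  have kvc : ∀ c ∈ C, ∃ w ∈ W, G.dist v w ≠ G.dist c w := by
    intro c hc
    have hcd0 : c ≠ d0 := fun h => Set.disjoint_left.1 hCD hc (h ▸ hd0)
    exact ⟨d0, hd0W, by
      rw [dvd' d0 hd0, dcd c (Or.inl hc) d0 (Or.inr hd0) hcd0]; omega⟩
  have kvd : ∀ d ∈ D, ∃ w ∈ W, G.dist v w ≠ G.dist d w := by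
    intro d hd
    exact ⟨d, Or.inr hd, by rw [dvd' d hd, SimpleGraph.dist_self]; omega⟩
  have kcc : ∀ c ∈ C, ∀ c' ∈ C, c ≠ c' → ∃ w ∈ W, G.dist c w ≠ G.dist c' w := by
    intro c hc c' hc' hne
    by_cases h : c = c0
    · refine ⟨c', Or.inl ⟨hc', fun hh => hne (h.trans hh.symm)⟩, ?_⟩
      rw [dcd c (Or.inl hc) c' (Or.inl hc') hne, SimpleGraph.dist_self]; omega
    · refine ⟨c, Or.inl ⟨hc, h⟩, ?_⟩
      rw [SimpleGraph.dist_self, dcd c' (Or.inl hc') c (Or.inl hc) (Ne.symm hne)]; omega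
  have kcd : ∀ c ∈ C, ∀ d ∈ D, ∃ w ∈ W, G.dist c w ≠ G.dist d w := by
    intro c hc d hd
    have hne : c ≠ d := fun h => Set.disjoint_left.1 hCD hc (h ▸ hd)
    by_cases h : c = c0
    · refine ⟨d, Or.inr hd, ?_⟩
      rw [dcd c (Or.inl hc) d (Or.inr hd) hne, SimpleGraph.dist_self]; omega
    · refine ⟨c, Or.inl ⟨hc, h⟩, ?_⟩
      rw [SimpleGraph.dist_self, dcd d (Or.inr hd) c (Or.inl hc) (Ne.symm hne)]; omega
  have kdd : ∀ d ∈ D, ∀ d' ∈ D, d ≠ d' → ∃ w ∈ W, G.dist d w ≠ G.dist d' w := by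
    intro d hd d' hd' hne
    refine ⟨d, Or.inr hd, ?_⟩
    rw [SimpleGraph.dist_self, dcd d' (Or.inr hd') d (Or.inr hd) (Ne.symm hne)]; omega
  have key : ∀ x y : V, x ≠ y → ∃ w ∈ W, G.dist x w ≠ G.dist y w := by
    intro x y hxy
    rcases hclass x with rfl | rfl | hx | hx <;> rcases hclass y with rfl | rfl | hy | hy
    · exact absurd rfl hxy
    · exact kuv
    · exact kuc y hy
    · exact kud y hy
    · exact flip _ _ kuv
    · exact absurd rfl hxy
    · exact kvc y hy
    · exact kvd y hy
    · exact flip _ _ (kuc x hx)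
    · exact flip _ _ (kvc x hx)
    · exact kcc x hx y hy hxy
    · exact kcd x hx y hy
    · exact flip _ _ (kud x hx)
    · exact flip _ _ (kvd x hx)
    · exact flip _ _ (kcd y hy x hx)
    · exact kdd x hx y hy hxy
  have hWres : Resolves G W := by
    intro x y h
    by_contra hne
    obtain ⟨w, hw, hne'⟩ := key x y hne
    exact hne' (h w hw)
  have hWcard : W.ncard = n - 3 := by
    have hdisj : Disjoint (C \ {c0}) D := hCD.mono_left Set.diff_subset
    have h1 : W.ncard = (C \ {c0}).ncard + D.ncard :=
      Set.ncard_union_eq hdisj (Set.toFinite _) (Set.toFinite _)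
    have h2 : (C \ {c0}).ncard = C.ncard - 1 :=
      Set.ncard_diff_singleton_of_mem hc0
    omega
  -- lower bound
  have lower : ∀ W' : Set V, Resolves G W' → n - 3 ≤ W'.ncard := by
    intro W' hres
    have hCW : ∀ c ∈ C, ∀ c' ∈ C, c ≠ c' → c ∈ W' ∨ c' ∈ W' := by
      intro c hc c' hc' hne
      by_contra hcon
      push_neg at hcon
      refine absurd (hres c c' ?_) hne
      intro w hw
      have hwc : w ≠ c := fun h => hcon.1 (h ▸ hw)
      have hwc' : w ≠ c' := fun h => hcon.2 (h ▸ hw)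
      rcases hclass w with rfl | rfl | hwC | hwD
      · rw [duc' c hc, duc' c' hc']
      · rw [dvc' c hc, dvc' c' hc']
      · rw [dcd c (Or.inl hc) w (Or.inl hwC) (Ne.symm hwc),
          dcd c' (Or.inl hc') w (Or.inl hwC) (Ne.symm hwc')]
      · rw [dcd c (Or.inl hc) w (Or.inr hwD) (Ne.symm hwc),
          dcd c' (Or.inl hc') w (Or.inr hwD) (Ne.symm hwc')]
    have hDWm : ∀ d ∈ D, ∀ d' ∈ D, d ≠ d' → d ∈ W' ∨ d' ∈ W' := by
      intro d hd d' hd' hne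
      by_contra hcon
      push_neg at hcon
      refine absurd (hres d d' ?_) hne
      intro w hw
      have hwd : w ≠ d := fun h => hcon.1 (h ▸ hw)
      have hwd' : w ≠ d' := fun h => hcon.2 (h ▸ hw)
      rcases hclass w with rfl | rfl | hwC | hwD
      · rw [dud' d hd, dud' d' hd']
      · rw [dvd'' d hd, dvd'' d' hd']
      · rw [dcd d (Or.inr hd) w (Or.inl hwC) (Ne.symm hwd),
          dcd d' (Or.inr hd') w (Or.inl hwC) (Ne.symm hwd')]
      · rw [dcd d (Or.inr hd) w (Or.inr hwD) (Ne.symm hwd),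
          dcd d' (Or.inr hd') w (Or.inr hwD) (Ne.symm hwd')]
    have hUV : ∀ c ∈ C, c ∉ W' → ∀ d ∈ D, d ∉ W' → u ∈ W' ∨ v ∈ W' := by
      intro c hc hcW d hd hdW
      by_contra hcon
      push_neg at hcon
      have hne : c ≠ d := fun h => Set.disjoint_left.1 hCD hc (h ▸ hd)
      refine absurd (hres c d ?_) hne
      intro w hw
      have hwu : w ≠ u := fun h => hcon.1 (h ▸ hw)
      have hwv : w ≠ v := fun h => hcon.2 (h ▸ hw)
      have hwc : w ≠ c := fun h => hcW (h ▸ hw)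
      have hwd : w ≠ d := fun h => hdW (h ▸ hw)
      rcases hclass w with rfl | rfl | hwC | hwD
      · exact absurd rfl hwu
      · exact absurd rfl hwv
      · rw [dcd c (Or.inl hc) w (Or.inl hwC) (Ne.symm hwc),
          dcd d (Or.inr hd) w (Or.inl hwC) (Ne.symm hwd)]
      · rw [dcd c (Or.inl hc) w (Or.inr hwD) (Ne.symm hwc),
          dcd d (Or.inr hd) w (Or.inr hwD) (Ne.symm hwd)]
    by_cases hCs : C ⊆ W'
    · by_cases hDs : D ⊆ W'
      · have hsub : C ∪ D ⊆ W' := Set.union_subset hCs hDs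
        have hle := Set.ncard_le_ncard hsub (Set.toFinite W')
        have heq := Set.ncard_union_eq hCD (Set.toFinite C) (Set.toFinite D)
        omega
      · obtain ⟨d', hd', hd'W⟩ := Set.not_subset.1 hDs
        have hsub : C ∪ (D \ {d'}) ⊆ W' := by
          apply Set.union_subset hCs
          intro x hx
          rcases hDWm x hx.1 d' hd' (fun h => hx.2 (by simpa using h)) with h | h
          · exact h
          · exact absurd h hd'W
        have hle := Set.ncard_le_ncard hsub (Set.toFinite W')
        have heq : (C ∪ (D \ {d'})).ncard = C.ncard + (D \ {d'}).ncard :=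
          Set.ncard_union_eq (hCD.mono_right Set.diff_subset) (Set.toFinite _) (Set.toFinite _)
        have h2 : (D \ {d'}).ncard = D.ncard - 1 :=
          Set.ncard_diff_singleton_of_mem hd'
        omega
    · obtain ⟨c', hc', hc'W⟩ := Set.not_subset.1 hCs
      have hCsub : C \ {c'} ⊆ W' := by
        intro x hx
        rcases hCW x hx.1 c' hc' (fun h => hx.2 (by simpa using h)) with h | h
        · exact h
        · exact absurd h hc'W
      by_cases hDs : D ⊆ W'
      · have hsub : (C \ {c'}) ∪ D ⊆ W' := Set.union_subset hCsub hDs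
        have hle := Set.ncard_le_ncard hsub (Set.toFinite W')
        have heq : ((C \ {c'}) ∪ D).ncard = (C \ {c'}).ncard + D.ncard :=
          Set.ncard_union_eq (hCD.mono_left Set.diff_subset) (Set.toFinite _) (Set.toFinite _)
        have h2 : (C \ {c'}).ncard = C.ncard - 1 :=
          Set.ncard_diff_singleton_of_mem hc'
        omega
      · obtain ⟨d', hd', hd'W⟩ := Set.not_subset.1 hDs
        have hDsub : D \ {d'} ⊆ W' := by
          intro x hx
          rcases hDWm x hx.1 d' hd' (fun h => hx.2 (by simpa using h)) with h | h
          · exact h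
          · exact absurd h hd'W
        obtain ⟨z, hzW, hzCD⟩ : ∃ z, z ∈ W' ∧ z ∉ C ∪ D := by
          rcases hUV c' hc' hc'W d' hd' hd'W with h | h
          · exact ⟨u, h, hu⟩
          · exact ⟨v, h, hv⟩
        have hsub : ((C \ {c'}) ∪ (D \ {d'})) ∪ {z} ⊆ W' := by
          apply Set.union_subset (Set.union_subset hCsub hDsub)
          intro x hx
          rw [Set.mem_singleton_iff] at hx
          exact hx ▸ hzW
        have hle := Set.ncard_le_ncard hsub (Set.toFinite W')
        have hd1 : Disjoint (C \ {c'}) (D \ {d'}) :=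
          (hCD.mono_left Set.diff_subset).mono_right Set.diff_subset
        have hd2 : Disjoint ((C \ {c'}) ∪ (D \ {d'})) ({z} : Set V) := by
          rw [Set.disjoint_singleton_right]
          rintro (hx | hx)
          · exact hzCD (Or.inl hx.1)
          · exact hzCD (Or.inr hx.1)
        have heq2 : (((C \ {c'}) ∪ (D \ {d'})) ∪ {z}).ncard =
            ((C \ {c'}) ∪ (D \ {d'})).ncard + 1 := by
          rw [Set.ncard_union_eq hd2 (Set.toFinite _) (Set.toFinite _), Set.ncard_singleton]
        have heq : ((C \ {c'}) ∪ (D \ {d'})).ncard = (C \ {c'}).ncard + (D \ {d'}).ncard :=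
          Set.ncard_union_eq hd1 (Set.toFinite _) (Set.toFinite _)
        have h2 : (C \ {c'}).ncard = C.ncard - 1 :=
          Set.ncard_diff_singleton_of_mem hc'
        have h3' : (D \ {d'}).ncard = D.ncard - 1 :=
          Set.ncard_diff_singleton_of_mem hd'
        omega
  have hmem : (n - 3) ∈ {k | ∃ W : Set V, W.ncard = k ∧ Resolves G W} := ⟨W, hWcard, hWres⟩
  refine le_antisymm (Nat.sInf_le hmem) ?_
  refine le_csInf ⟨n - 3, hmem⟩ ?_
  rintro k ⟨W', hk, hres⟩
  exact hk ▸ lower W' hres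
end

section
/- Let Γ be the graph on vertex set A ∪ {v} ∪ C ∪ D where A ∪ {v} and C ∪ D each induce complete graphs, v is adjacent to every vertex of C, there are no edges between A and C ∪ D, and no edges between {v} and D, with |A| = n₁ ≥ 2, |C| = n₃ ≥ 3, |D| = n₄ ≥ 1. Then the metric dimension of Γ is n − 4, where n = n₁ + 1 + n₃ + n₄. -/
open SimpleGraph

variable {V : Type*}

section MyAux
variable {V : Type*} {G : SimpleGraph V} {x w w' y : V}

lemma myDist_le_two (h1 : G.Adj x w) (h2 : G.Adj w y) : G.dist x y ≤ 2 := by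
  simpa using SimpleGraph.dist_le (Walk.cons h1 (Walk.cons h2 Walk.nil))

lemma myTwo_le_dist (hr : G.Reachable x y) (hne : x ≠ y) (hna : ¬ G.Adj x y) :
    2 ≤ G.dist x y := by
  have h0 := hr.pos_dist_of_ne hne
  have h1 : G.dist x y ≠ 1 := fun h => hna (SimpleGraph.dist_eq_one_iff_adj.mp h)
  omega

lemma myDist_eq_two (h1 : G.Adj x w) (h2 : G.Adj w y) (hne : x ≠ y) (hna : ¬ G.Adj x y) :
    G.dist x y = 2 :=
  le_antisymm (myDist_le_two h1 h2)
    (myTwo_le_dist ⟨Walk.cons h1 (Walk.cons h2 Walk.nil)⟩ hne hna)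

lemma myDist_eq_three (h1 : G.Adj x w) (h2 : G.Adj w w') (h3 : G.Adj w' y)
    (hne : x ≠ y) (hna : ¬ G.Adj x y)
    (hmid : ∀ z, G.Adj x z → G.Adj z y → False) : G.dist x y = 3 := by
  have hr : G.Reachable x y := ⟨Walk.cons h1 (Walk.cons h2 (Walk.cons h3 Walk.nil))⟩
  have hle : G.dist x y ≤ 3 := by
    simpa using SimpleGraph.dist_le (Walk.cons h1 (Walk.cons h2 (Walk.cons h3 Walk.nil)))
  have h2le := myTwo_le_dist hr hne hna
  have hne2 : G.dist x y ≠ 2 := by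
    intro hd
    obtain ⟨p, hp⟩ := hr.exists_walk_length_eq_dist
    rw [hd] at hp
    cases p with
    | nil => simp at hp
    | cons ha q =>
      cases q with
      | nil => simp at hp
      | cons hb q' =>
        have h0 : q'.length = 0 := by simpa using hp
        have := SimpleGraph.Walk.eq_of_length_eq_zero h0
        exact hmid _ ha (this ▸ hb)
  omega

end MyAux

theorem metricDim_diam3_rho1_large [Fintype V] (G : SimpleGraph V)
    (A : Set V) (v : V) (C D : Set V) (n n1 n3 n4 : ℕ)
    (hcard : Fintype.card V = n) (hn : n = n1 + 1 + n3 + n4)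
    (hA : A.ncard = n1) (hC : C.ncard = n3) (hD : D.ncard = n4)
    (h1 : 2 ≤ n1) (h3 : 3 ≤ n3) (h4 : 1 ≤ n4)
    (hvA : v ∉ A) (hvCD : v ∉ C ∪ D) (hACD : Disjoint A (C ∪ D)) (hCD : Disjoint C D)
    (hunion : A ∪ {v} ∪ C ∪ D = Set.univ)
    (hadj : ∀ x z : V, G.Adj x z ↔ x ≠ z ∧
      ((x ∈ A ∪ {v} ∧ z ∈ A ∪ {v}) ∨ (x ∈ C ∪ D ∧ z ∈ C ∪ D) ∨
       (x = v ∧ z ∈ C) ∨ (x ∈ C ∧ z = v))) :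
    metricDim G = n - 4 := by
  classical
  -- basic membership facts
  have hvC : v ∉ C := fun h => hvCD (Or.inl h)
  have hvD : v ∉ D := fun h => hvCD (Or.inr h)
  have hAC : ∀ {z}, z ∈ A → z ∈ C → False :=
    fun hz hc => Set.disjoint_left.mp hACD hz (Or.inl hc)
  have hAD : ∀ {z}, z ∈ A → z ∈ D → False :=
    fun hz hc => Set.disjoint_left.mp hACD hz (Or.inr hc)
  have hCDd : ∀ {z}, z ∈ C → z ∈ D → False := fun hz hc => Set.disjoint_left.mp hCD hz hc
  have hsplit : ∀ x : V, x ∈ A ∨ x = v ∨ x ∈ C ∨ x ∈ D := by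
    intro x
    have hx : x ∈ A ∪ {v} ∪ C ∪ D := hunion ▸ Set.mem_univ x
    simp only [Set.mem_union, Set.mem_singleton_iff] at hx
    tauto
  -- adjacency facts
  have adjAA : ∀ {a b}, a ∈ A ∪ {v} → b ∈ A ∪ {v} → a ≠ b → G.Adj a b :=
    fun ha hb hne => (hadj _ _).mpr ⟨hne, Or.inl ⟨ha, hb⟩⟩
  have adjCC : ∀ {a b}, a ∈ C ∪ D → b ∈ C ∪ D → a ≠ b → G.Adj a b :=
    fun ha hb hne => (hadj _ _).mpr ⟨hne, Or.inr (Or.inl ⟨ha, hb⟩)⟩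
  have adjvC : ∀ {c}, c ∈ C → G.Adj v c :=
    fun hc => (hadj _ _).mpr ⟨fun h => hvC (h ▸ hc), Or.inr (Or.inr (Or.inl ⟨rfl, hc⟩))⟩
  have nadjACD : ∀ {a b}, a ∈ A → b ∈ C ∪ D → ¬ G.Adj a b := by
    intro a b ha hb hadj'
    rcases ((hadj _ _).mp hadj').2 with ⟨_, h⟩ | ⟨h, _⟩ | ⟨h, _⟩ | ⟨h, _⟩
    · rcases h with h | h
      · rcases hb with hb | hb
        · exact hAC h hb
        · exact hAD h hb
      · rcases hb with hb | hb
        · exact hvC (h ▸ hb)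
        · exact hvD (h ▸ hb)
    · rcases h with h | h
      · exact hAC ha h
      · exact hAD ha h
    · exact hvA (h ▸ ha)
    · exact hAC ha h
  have nadjvD : ∀ {b}, b ∈ D → ¬ G.Adj v b := by
    intro b hb hadj'
    rcases ((hadj _ _).mp hadj').2 with ⟨_, h⟩ | ⟨h, _⟩ | ⟨_, h⟩ | ⟨h, _⟩
    · rcases h with h | h
      · exact hAD h hb
      · exact hvD (h ▸ hb)
    · exact hvCD h
    · exact hCDd h hb
    · exact hvC h
  -- chosen elements
  obtain ⟨a0, ha0, a1, ha1, ha01⟩ := (Set.one_lt_ncard (Set.toFinite A)).mp (by omega)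
  obtain ⟨c0, hc0, c1, hc1, hc01⟩ := (Set.one_lt_ncard (Set.toFinite C)).mp (by omega)
  obtain ⟨d0, hd0⟩ : D.Nonempty := Set.nonempty_of_ncard_ne_zero (by omega)
  -- distance facts
  have dAA : ∀ {a b}, a ∈ A ∪ {v} → b ∈ A ∪ {v} → a ≠ b → G.dist a b = 1 :=
    fun ha hb hne => SimpleGraph.dist_eq_one_iff_adj.mpr (adjAA ha hb hne)
  have dCC : ∀ {a b}, a ∈ C ∪ D → b ∈ C ∪ D → a ≠ b → G.dist a b = 1 :=
    fun ha hb hne => SimpleGraph.dist_eq_one_iff_adj.mpr (adjCC ha hb hne)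
  have dAC : ∀ {a c}, a ∈ A → c ∈ C → G.dist a c = 2 := by
    intro a c ha hc
    exact myDist_eq_two (adjAA (Or.inl ha) (Or.inr rfl) (fun h => hvA (h ▸ ha))) (adjvC hc)
      (fun h => hAC (h ▸ ha) hc) (nadjACD ha (Or.inl hc))
  have dvD : ∀ {d}, d ∈ D → G.dist v d = 2 := by
    intro d hd
    exact myDist_eq_two (adjvC hc0) (adjCC (Or.inl hc0) (Or.inr hd) (fun h => hCDd (h ▸ hc0) hd))
      (fun h => hvD (h ▸ hd)) (nadjvD hd)
  have dAD : ∀ {a d}, a ∈ A → d ∈ D → G.dist a d = 3 := by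
    intro a d ha hd
    refine myDist_eq_three (adjAA (Or.inl ha) (Or.inr rfl) (fun h => hvA (h ▸ ha))) (adjvC hc0)
      (adjCC (Or.inl hc0) (Or.inr hd) (fun h => hCDd (h ▸ hc0) hd))
      (fun h => hAD (h ▸ ha) hd) (nadjACD ha (Or.inr hd)) ?_
    intro z hz1 hz2
    -- z is a neighbour of a, hence in A ∪ {v}
    have hzA : z ∈ A ∪ {v} := by
      rcases ((hadj _ _).mp hz1).2 with ⟨_, h⟩ | ⟨h, _⟩ | ⟨h, _⟩ | ⟨h, _⟩
      · exact h
      · rcases h with h | h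
        · exact absurd (hAC ha h) id
        · exact absurd (hAD ha h) id
      · exact absurd (hvA (h ▸ ha)) id
      · exact absurd (hAC ha h) id
    rcases hzA with hz | hz
    · exact nadjACD hz (Or.inr hd) hz2
    · exact nadjvD hd (hz ▸ hz2)
  -- connectivity
  have hreach : ∀ x : V, G.Reachable v x := by
    intro x
    rcases hsplit x with hx | hx | hx | hx
    · exact (adjAA (Or.inr rfl) (Or.inl hx) (fun h => hvA (h ▸ hx))).reachable
    · subst hx; exact Reachable.refl _
    · exact (adjvC hx).reachable
    · exact (adjvC hc0).reachable.trans
        (adjCC (Or.inl hc0) (Or.inr hx) (fun h => hCDd (h ▸ hc0) hx)).reachable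
  have hconn : G.Connected := by
    rw [SimpleGraph.connected_iff]
    exact ⟨fun x y => (hreach x).symm.trans (hreach y), ⟨v⟩⟩
  -- the resolving set
  set W : Set V := (A \ {a0}) ∪ ((C \ {c0}) ∪ (D \ {d0})) with hW
  have hWmem : Resolves G W := by
    intro x y hxy
    by_contra hne
    -- if x ∈ W then done
    have hWkill : ∀ {p q : V}, p ∈ W → G.dist p p = G.dist q p → q = p := by
      intro p q hp hpq
      rw [SimpleGraph.dist_self] at hpq
      exact (hconn.dist_eq_zero_iff.mp hpq.symm)
    have hxW : x ∉ W := fun hx => hne ((hWkill hx (hxy x hx)).symm)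
    have hyW : y ∉ W := fun hy => hne (by
      have := hxy y hy
      rw [SimpleGraph.dist_self] at this
      exact hconn.dist_eq_zero_iff.mp this)
    have ha1W : a1 ∈ W := Or.inl ⟨ha1, fun h => ha01 (h ▸ rfl)⟩
    have hc1W : c1 ∈ W := Or.inr (Or.inl ⟨hc1, fun h => hc01 (h ▸ rfl)⟩)
    have e1 := hxy a1 ha1W
    have e2 := hxy c1 hc1W
    -- reduce x and y to one of a0, v, c0, d0
    have hred : ∀ z : V, z ∉ W → z = a0 ∨ z = v ∨ z = c0 ∨ z = d0 := by
      intro z hz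
      rcases hsplit z with h | h | h | h
      · left; by_contra hzz; exact hz (Or.inl ⟨h, hzz⟩)
      · right; left; exact h
      · right; right; left; by_contra hzz; exact hz (Or.inr (Or.inl ⟨h, hzz⟩))
      · right; right; right; by_contra hzz; exact hz (Or.inr (Or.inr ⟨h, hzz⟩))
    -- dist values
    have da0a1 : G.dist a0 a1 = 1 := dAA (Or.inl ha0) (Or.inl ha1) ha01
    have dva1 : G.dist v a1 = 1 := dAA (Or.inr rfl) (Or.inl ha1) (fun h => hvA (h ▸ ha1))
    have dc0a1 : G.dist c0 a1 = 2 := by rw [SimpleGraph.dist_comm]; exact dAC ha1 hc0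
    have dd0a1 : G.dist d0 a1 = 3 := by rw [SimpleGraph.dist_comm]; exact dAD ha1 hd0
    have da0c1 : G.dist a0 c1 = 2 := dAC ha0 hc1
    have dvc1 : G.dist v c1 = 1 := SimpleGraph.dist_eq_one_iff_adj.mpr (adjvC hc1)
    have dc0c1 : G.dist c0 c1 = 1 := dCC (Or.inl hc0) (Or.inl hc1) hc01
    have dd0c1 : G.dist d0 c1 = 1 := dCC (Or.inr hd0) (Or.inl hc1)
      (fun h => hCDd hc1 (h ▸ hd0))
    rcases hred x hxW with hx | hx | hx | hx <;> rcases hred y hyW with hy | hy | hy | hy <;>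
      subst hx <;> subst hy <;>
      first
        | exact hne rfl
        | (rw [da0a1] at e1 <;> rw [da0c1] at e2) <;> omega
        | omega
        | (simp only [da0a1, dva1, dc0a1, dd0a1] at e1;
           simp only [da0c1, dvc1, dc0c1, dd0c1] at e2; omega)
  have hWcard : W.ncard = n - 4 := by
    have hd1 : (A \ {a0}).ncard = n1 - 1 := by
      rw [Set.ncard_diff_singleton_of_mem ha0, hA]
    have hd2 : (C \ {c0}).ncard = n3 - 1 := by
      rw [Set.ncard_diff_singleton_of_mem hc0, hC]
    have hd3 : (D \ {d0}).ncard = n4 - 1 := by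
      rw [Set.ncard_diff_singleton_of_mem hd0, hD]
    have hdisj1 : Disjoint (C \ {c0}) (D \ {d0}) :=
      (hCD.mono Set.diff_subset Set.diff_subset)
    have hdisj2 : Disjoint (A \ {a0}) ((C \ {c0}) ∪ (D \ {d0})) := by
      refine (hACD.mono Set.diff_subset ?_)
      intro z hz
      rcases hz with hz | hz
      · exact Or.inl hz.1
      · exact Or.inr hz.1
    rw [hW, Set.ncard_union_eq hdisj2 (Set.toFinite _) (Set.toFinite _),
      Set.ncard_union_eq hdisj1 (Set.toFinite _) (Set.toFinite _), hd1, hd2, hd3]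
    omega
  -- lower bound
  have hlb : ∀ k, (∃ W' : Set V, W'.ncard = k ∧ Resolves G W') → n - 4 ≤ k := by
    rintro k ⟨W', hWc, hWr⟩
    have same : ∀ (S : Set V), (∀ x u, x ∈ S → u ∈ W' → x ≠ u → G.dist x u = G.dist v u) →
        True := fun _ _ => trivial
    -- twins in each part outside W' coincide
    have pairA : ∀ x y, x ∈ A → y ∈ A → x ∉ W' → y ∉ W' → x = y := by
      intro x y hx hy hxW hyW
      apply hWr
      intro u hu
      have hux : x ≠ u := fun h => hxW (h ▸ hu)
      have huy : y ≠ u := fun h => hyW (h ▸ hu)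
      rcases hsplit u with h | h | h | h
      · rw [dAA (Or.inl hx) (Or.inl h) hux, dAA (Or.inl hy) (Or.inl h) huy]
      · rw [h, dAA (Or.inl hx) (Or.inr rfl) (fun hh => hvA (hh ▸ hx)),
          dAA (Or.inl hy) (Or.inr rfl) (fun hh => hvA (hh ▸ hy))]
      · rw [dAC hx h, dAC hy h]
      · rw [dAD hx h, dAD hy h]
    have pairC : ∀ x y, x ∈ C → y ∈ C → x ∉ W' → y ∉ W' → x = y := by
      intro x y hx hy hxW hyW
      apply hWr
      intro u hu
      have hux : x ≠ u := fun h => hxW (h ▸ hu)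
      have huy : y ≠ u := fun h => hyW (h ▸ hu)
      rcases hsplit u with h | h | h | h
      · rw [SimpleGraph.dist_comm, dAC h hx, SimpleGraph.dist_comm (v := u), dAC h hy]
      · subst h
        rw [SimpleGraph.dist_comm, SimpleGraph.dist_eq_one_iff_adj.mpr (adjvC hx),
          SimpleGraph.dist_comm (v := u), SimpleGraph.dist_eq_one_iff_adj.mpr (adjvC hy)]
      · rw [dCC (Or.inl hx) (Or.inl h) hux, dCC (Or.inl hy) (Or.inl h) huy]
      · rw [dCC (Or.inl hx) (Or.inr h) hux, dCC (Or.inl hy) (Or.inr h) huy]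
    have pairD : ∀ x y, x ∈ D → y ∈ D → x ∉ W' → y ∉ W' → x = y := by
      intro x y hx hy hxW hyW
      apply hWr
      intro u hu
      have hux : x ≠ u := fun h => hxW (h ▸ hu)
      have huy : y ≠ u := fun h => hyW (h ▸ hu)
      rcases hsplit u with h | h | h | h
      · rw [SimpleGraph.dist_comm, dAD h hx, SimpleGraph.dist_comm (v := u), dAD h hy]
      · subst h
        rw [SimpleGraph.dist_comm, dvD hx, SimpleGraph.dist_comm (v := u), dvD hy]
      · rw [dCC (Or.inr hx) (Or.inl h) hux, dCC (Or.inr hy) (Or.inl h) huy]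
      · rw [dCC (Or.inr hx) (Or.inr h) hux, dCC (Or.inr hy) (Or.inr h) huy]
    have cardA : (A \ W').ncard ≤ 1 := by
      rw [Set.ncard_le_one (Set.toFinite _)]
      exact fun a ha b hb => pairA a b ha.1 hb.1 ha.2 hb.2
    have cardC : (C \ W').ncard ≤ 1 := by
      rw [Set.ncard_le_one (Set.toFinite _)]
      exact fun a ha b hb => pairC a b ha.1 hb.1 ha.2 hb.2
    have cardD : (D \ W').ncard ≤ 1 := by
      rw [Set.ncard_le_one (Set.toFinite _)]
      exact fun a ha b hb => pairD a b ha.1 hb.1 ha.2 hb.2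
    have hAi := Set.ncard_inter_add_ncard_diff_eq_ncard A W' (Set.toFinite A)
    have hCi := Set.ncard_inter_add_ncard_diff_eq_ncard C W' (Set.toFinite C)
    have hDi := Set.ncard_inter_add_ncard_diff_eq_ncard D W' (Set.toFinite D)
    have hsub : (A ∩ W') ∪ ((C ∩ W') ∪ (D ∩ W')) ⊆ W' := by
      rintro z (hz | hz | hz) <;> exact hz.2
    have hd1 : Disjoint (C ∩ W') (D ∩ W') :=
      hCD.mono Set.inter_subset_left Set.inter_subset_left
    have hd2 : Disjoint (A ∩ W') ((C ∩ W') ∪ (D ∩ W')) := by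
      refine hACD.mono Set.inter_subset_left ?_
      rintro z (hz | hz)
      · exact Or.inl hz.1
      · exact Or.inr hz.1
    have hle : ((A ∩ W') ∪ ((C ∩ W') ∪ (D ∩ W'))).ncard ≤ W'.ncard :=
      Set.ncard_le_ncard hsub (Set.toFinite _)
    rw [Set.ncard_union_eq hd2 (Set.toFinite _) (Set.toFinite _),
      Set.ncard_union_eq hd1 (Set.toFinite _) (Set.toFinite _), hWc] at hle
    omega
  refine le_antisymm (Nat.sInf_le ⟨W, hWcard, hWmem⟩) ?_
  exact le_csInf ⟨n - 4, W, hWcard, hWmem⟩ fun k hk => hlb k hk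
end
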